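/- The family of ℝ-linear endomorphisms (id, I, J, K) of ℍ, where I(x) = i x i⁻¹, J(x) = j x j⁻¹, K(x) = k x k⁻¹, is a basis of the space of ℝ-linear endomorphisms of ℍ regarded as a left ℍ-module, where a quaternion a acts on an endomorphism f by (a • f)(x) = a · f(x). -/

import Mathlib

/-! As a left vector space over the division ring `ℍ`, `ℍ →ₗ[ℝ] ℍ` has dimension
`finrank ℝ ℍ = 4`, so it suffices that `id, I, J, K` are `ℍ`-linearly independent. Each of them
multiplies each of `1, i, j, k` by a sign, so evaluating a relation `∑ aₙ • fₙ = 0` at these four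
points gives four relations `∑ ±aₙ = 0`; their sign matrix is a Hadamard matrix, hence invertible,
and all `aₙ` vanish. -/

open Quaternion Matrix

noncomputable def quatBasis : Module.Basis (Fin 4) ℝ ℍ[ℝ] :=
  QuaternionAlgebra.basisOneIJK (-1 : ℝ) 0 (-1)

noncomputable def qi : ℍ[ℝ] := ⟨0, 1, 0, 0⟩
noncomputable def qj : ℍ[ℝ] := ⟨0, 0, 1, 0⟩
noncomputable def qk : ℍ[ℝ] := ⟨0, 0, 0, 1⟩

noncomputable def Imap : ℍ[ℝ] →ₗ[ℝ] ℍ[ℝ] where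
  toFun x := qi * x * qi⁻¹
  map_add' x y := by simp [mul_add, add_mul]
  map_smul' r x := by simp [mul_smul_comm, smul_mul_assoc]

noncomputable def Jmap : ℍ[ℝ] →ₗ[ℝ] ℍ[ℝ] where
  toFun x := qj * x * qj⁻¹
  map_add' x y := by simp [mul_add, add_mul]
  map_smul' r x := by simp [mul_smul_comm, smul_mul_assoc]

noncomputable def Kmap : ℍ[ℝ] →ₗ[ℝ] ℍ[ℝ] where
  toFun x := qk * x * qk⁻¹
  map_add' x y := by simp [mul_add, add_mul]
  map_smul' r x := by simp [mul_smul_comm, smul_mul_assoc]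

@[simp] lemma qi_re : qi.re = 0 := rfl
@[simp] lemma qi_imI : qi.imI = 1 := rfl
@[simp] lemma qi_imJ : qi.imJ = 0 := rfl
@[simp] lemma qi_imK : qi.imK = 0 := rfl
@[simp] lemma qj_re : qj.re = 0 := rfl
@[simp] lemma qj_imI : qj.imI = 0 := rfl
@[simp] lemma qj_imJ : qj.imJ = 1 := rfl
@[simp] lemma qj_imK : qj.imK = 0 := rfl
@[simp] lemma qk_re : qk.re = 0 := rfl
@[simp] lemma qk_imI : qk.imI = 0 := rfl
@[simp] lemma qk_imJ : qk.imJ = 0 := rfl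
@[simp] lemma qk_imK : qk.imK = 1 := rfl

lemma qi_ne_zero : qi ≠ 0 := fun h => by simpa using congrArg QuaternionAlgebra.imI h
lemma qj_ne_zero : qj ≠ 0 := fun h => by simpa using congrArg QuaternionAlgebra.imJ h
lemma qk_ne_zero : qk ≠ 0 := fun h => by simpa using congrArg QuaternionAlgebra.imK h

lemma qi_inv : qi⁻¹ = -qi := inv_eq_of_mul_eq_one_right <| by ext <;> simp
lemma qj_inv : qj⁻¹ = -qj := inv_eq_of_mul_eq_one_right <| by ext <;> simp
lemma qk_inv : qk⁻¹ = -qk := inv_eq_of_mul_eq_one_right <| by ext <;> simp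

@[simp] lemma Imap_apply (x : ℍ[ℝ]) : Imap x = qi * x * -qi := by rw [← qi_inv]; rfl
@[simp] lemma Jmap_apply (x : ℍ[ℝ]) : Jmap x = qj * x * -qj := by rw [← qj_inv]; rfl
@[simp] lemma Kmap_apply (x : ℍ[ℝ]) : Kmap x = qk * x * -qk := by rw [← qk_inv]; rfl

theorem sum_smul_eq_zero_of_apply_eq_smul {ι R D : Type*} [Fintype ι] [CommSemiring R]
    [DivisionRing D] [Algebra R D] {f : ι → D →ₗ[R] D} {g : ι → D} (hfg : ∑ n, g n • f n = 0)
    {e : D} (he : e ≠ 0) {s : ι → R} (hs : ∀ n, f n e = s n • e) : ∑ n, s n • g n = 0 := by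
  have h := LinearMap.congr_fun hfg e
  simp only [LinearMap.sum_apply, LinearMap.smul_apply, hs, LinearMap.zero_apply, smul_eq_mul,
    mul_smul_comm, ← smul_mul_assoc, ← Finset.sum_mul] at h
  exact (mul_eq_zero.mp h).resolve_right he

theorem linearIndependent_id_Imap_Jmap_Kmap :
    LinearIndependent ℍ[ℝ] ![LinearMap.id, Imap, Jmap, Kmap] := by
  rw [Fintype.linearIndependent_iff]
  intro g hg
  have h1 := sum_smul_eq_zero_of_apply_eq_smul hg one_ne_zero (s := ![1, 1, 1, 1])
    (by intro n; fin_cases n <;> ext <;> simp)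
  have hi := sum_smul_eq_zero_of_apply_eq_smul hg qi_ne_zero (s := ![1, 1, -1, -1])
    (by intro n; fin_cases n <;> ext <;> simp)
  have hj := sum_smul_eq_zero_of_apply_eq_smul hg qj_ne_zero (s := ![1, -1, 1, -1])
    (by intro n; fin_cases n <;> ext <;> simp)
  have hk := sum_smul_eq_zero_of_apply_eq_smul hg qk_ne_zero (s := ![1, -1, -1, 1])
    (by intro n; fin_cases n <;> ext <;> simp)
  simp only [Fin.sum_univ_four, Matrix.cons_val_zero, Matrix.cons_val_one, Matrix.cons_val_two,
    Matrix.cons_val_three, Matrix.head_cons, Matrix.tail_cons] at h1 hi hj hk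
  intro n
  fin_cases n
  · show g 0 = 0
    linear_combination (norm := module) (4 : ℝ)⁻¹ • (h1 + hi + hj + hk)
  · show g 1 = 0
    linear_combination (norm := module) (4 : ℝ)⁻¹ • (h1 + hi - hj - hk)
  · show g 2 = 0
    linear_combination (norm := module) (4 : ℝ)⁻¹ • (h1 - hi + hj - hk)
  · show g 3 = 0
    linear_combination (norm := module) (4 : ℝ)⁻¹ • (h1 - hi - hj + hk)

/-- The family (id, I, J, K) is a basis of the left ℍ-module of ℝ-linear endomorphisms
of ℍ, where `(a • f) x = a * f x`. -/
theorem stmt14 :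
    ∃ b : Module.Basis (Fin 4) ℍ[ℝ] (ℍ[ℝ] →ₗ[ℝ] ℍ[ℝ]),
      ⇑b = ![LinearMap.id, Imap, Jmap, Kmap] := by
  have hcard : Fintype.card (Fin 4) = Module.finrank ℍ[ℝ] (ℍ[ℝ] →ₗ[ℝ] ℍ[ℝ]) := by
    rw [Module.finrank_linearMap_self, Quaternion.finrank_eq_four, Fintype.card_fin]
  exact ⟨basisOfLinearIndependentOfCardEqFinrank linearIndependent_id_Imap_Jmap_Kmap hcard,
    coe_basisOfLinearIndependentOfCardEqFinrank _ _⟩
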